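/- arXiv:1903.03666 — 5 statements merged into one kernel-verified Lean document; each statement's English description precedes it below -/
import Mathlib

section
/- Let X be a random vector in ℝ^d with density p satisfying E|X|² = d and sup_x p(x) ≤ M for some constant M ≥ (2π)^{-d/2}. Then the relative entropy to the standard Gaussian satisfies D(X‖Z) ≥ Δ²/(2M), where Δ = ‖p − φ‖₂. -/
open Real MeasureTheory Set

/-!
For `0 ≤ a ≤ M` and `0 < b ≤ M`, the function
`g x = x log (x / b) - x + b - (x - b)² / (2M)` vanishes at `b` and has derivative
`log (x / b) - (x - b) / M`, which is `≤ 0` on `(0, b)` and `≥ 0` on `(b, M)` by the elementary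
bounds `(x - b) / x ≤ log (x / b) ≤ (x - b) / b`; hence `g a ≥ 0`. Integrating this with
`a = p x`, `b = φ x` gives the bound, the linear term `p - φ` integrating to `0` because
both densities have total mass one.
-/

theorem log_div_le_sub_div {x b M : ℝ} (hx : 0 < x) (hxb : x ≤ b) (hbM : b ≤ M) :
    log (x / b) ≤ (x - b) / M := by
  have hb : 0 < b := hx.trans_le hxb
  calc log (x / b) ≤ x / b - 1 := log_le_sub_one_of_pos (div_pos hx hb)
    _ = (x - b) / b := by rw [sub_div, div_self hb.ne']
    _ ≤ (x - b) / M := by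
      rw [div_le_div_iff₀ hb (hb.trans_le hbM)]
      nlinarith

theorem sub_div_le_log_div {x b M : ℝ} (hb : 0 < b) (hbx : b ≤ x) (hxM : x ≤ M) :
    (x - b) / M ≤ log (x / b) := by
  have hx : 0 < x := hb.trans_le hbx
  calc (x - b) / M ≤ (x - b) / x := div_le_div_of_nonneg_left (by linarith) hx hxM
    _ = 1 - (x / b)⁻¹ := by rw [sub_div, div_self hx.ne', inv_div]
    _ ≤ log (x / b) := one_sub_inv_le_log_of_pos (div_pos hx hb)

theorem sub_add_sq_div_le_mul_log_div {a b M : ℝ} (ha : 0 ≤ a) (haM : a ≤ M) (hb : 0 < b)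
    (hbM : b ≤ M) : a - b + (a - b) ^ 2 / (2 * M) ≤ a * log (a / b) := by
  set g : ℝ → ℝ := fun x ↦ x * log x - x * log b - x + b - (x - b) ^ 2 / (2 * M) with hg
  have hM : 0 < M := hb.trans_le hbM
  have hg_cont : Continuous g := by fun_prop
  have hg_deriv (x : ℝ) (hx : 0 < x) : HasDerivAt g (log (x / b) - (x - b) / M) x := by
    refine (((((hasDerivAt_mul_log hx.ne').sub ((hasDerivAt_id x).mul_const (log b))).sub
      (hasDerivAt_id x)).add_const b).sub ((((hasDerivAt_id x).sub_const b).pow 2).div_const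
      (2 * M))).congr_deriv ?_
    rw [log_div hx.ne' hb.ne']
    simp only [id]
    field_simp
    ring
  have hg_b : g b = 0 := by simp [hg]
  have hg_a : 0 ≤ g a := by
    rcases le_total a b with hab | hba
    · refine hg_b ▸ antitoneOn_of_hasDerivWithinAt_nonpos (convex_Icc a b)
        (f' := fun x ↦ log (x / b) - (x - b) / M) hg_cont.continuousOn (fun x hx ↦ ?_)
        (fun x hx ↦ ?_) ⟨le_rfl, hab⟩ ⟨hab, le_rfl⟩ hab <;> rw [interior_Icc] at hx
      · exact (hg_deriv x (ha.trans_lt hx.1)).hasDerivWithinAt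
      · exact sub_nonpos.2 (log_div_le_sub_div (ha.trans_lt hx.1) hx.2.le hbM)
    · refine hg_b ▸ monotoneOn_of_hasDerivWithinAt_nonneg (convex_Icc b a)
        (f' := fun x ↦ log (x / b) - (x - b) / M) hg_cont.continuousOn (fun x hx ↦ ?_)
        (fun x hx ↦ ?_) ⟨le_rfl, hba⟩ ⟨hba, le_rfl⟩ hba <;> rw [interior_Icc] at hx
      · exact (hg_deriv x (hb.trans hx.1)).hasDerivWithinAt
      · exact sub_nonneg.2 (sub_div_le_log_div hb hx.1.le (hx.2.le.trans haM))
  have hlog : a * log (a / b) = a * log a - a * log b := by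
    rcases ha.eq_or_lt with rfl | ha'
    · simp
    · rw [log_div ha'.ne' hb.ne']; ring
  simp only [hg] at hg_a
  linarith

theorem integral_sq_sub_div_le_integral_mul_log_div {α : Type*} [MeasurableSpace α]
    {μ : Measure α} {p q : α → ℝ} {M : ℝ} (hp_nonneg : ∀ x, 0 ≤ p x) (hpM : ∀ x, p x ≤ M)
    (hq_pos : ∀ x, 0 < q x) (hqM : ∀ x, q x ≤ M) (hp : Integrable p μ) (hq : Integrable q μ)
    (hpq : ∫ x, p x ∂μ = ∫ x, q x ∂μ) (hD : Integrable (fun x ↦ p x * log (p x / q x)) μ)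
    (hΔ : Integrable (fun x ↦ (p x - q x) ^ 2) μ) :
    (∫ x, (p x - q x) ^ 2 ∂μ) / (2 * M) ≤ ∫ x, p x * log (p x / q x) ∂μ :=
  calc (∫ x, (p x - q x) ^ 2 ∂μ) / (2 * M)
      = ∫ x, (p x - q x + (p x - q x) ^ 2 / (2 * M)) ∂μ := by
        have hpq_int : Integrable (fun x ↦ p x - q x) μ := hp.sub hq
        rw [integral_add hpq_int (hΔ.div_const _), integral_sub hp hq, hpq, sub_self,
          zero_add, integral_div]
    _ ≤ ∫ x, p x * log (p x / q x) ∂μ :=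
        integral_mono ((hp.sub hq).add (hΔ.div_const _)) hD fun x ↦
          sub_add_sq_div_le_mul_log_div (hp_nonneg x) (hpM x) (hq_pos x) (hqM x)

theorem integral_gaussian_density_eq_one {V : Type*} [NormedAddCommGroup V]
    [InnerProductSpace ℝ V] [FiniteDimensional ℝ V] [MeasurableSpace V] [BorelSpace V] :
    ∫ v : V, (2 * π) ^ (-(Module.finrank ℝ V : ℝ) / 2) * exp (-‖v‖ ^ 2 / 2) = 1 := by
  have h := GaussianFourier.integral_rexp_neg_mul_sq_norm (V := V) (one_half_pos (α := ℝ))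
  simp_rw [neg_mul, one_div_mul_eq_div, show π / (1 / 2) = 2 * π by ring] at h
  simp_rw [integral_const_mul, neg_div, h]
  rw [rpow_neg (by positivity), inv_mul_cancel₀ (by positivity)]

theorem relative_entropy_lower_bound_general (d : ℕ)
    (p : EuclideanSpace ℝ (Fin d) → ℝ)
    (φ : EuclideanSpace ℝ (Fin d) → ℝ)
    (hφ : φ = fun x => (2 * π) ^ (-(d : ℝ) / 2) * Real.exp (-‖x‖ ^ 2 / 2))
    (hp_nonneg : ∀ x, 0 ≤ p x)
    (hp_int : ∫ x, p x = 1)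
    (M : ℝ) (hM : (2 * π) ^ (-(d : ℝ) / 2) ≤ M) (hpM : ∀ x, p x ≤ M)
    (hD_int : Integrable (fun x => p x * Real.log (p x / φ x)))
    (hΔ_int : Integrable (fun x => (p x - φ x) ^ 2)) :
    (∫ x, (p x - φ x) ^ 2) / (2 * M) ≤ ∫ x, p x * Real.log (p x / φ x) := by
  have hφ_int : ∫ x, φ x = 1 := by
    simpa [hφ, finrank_euclideanSpace_fin] using
      integral_gaussian_density_eq_one (V := EuclideanSpace ℝ (Fin d))
  have hφM (x) : φ x ≤ M := by
    rw [hφ]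
    refine le_trans (mul_le_of_le_one_right (by positivity) ?_) hM
    exact exp_le_one_iff.2 (by nlinarith [norm_nonneg x])
  exact integral_sq_sub_div_le_integral_mul_log_div hp_nonneg hpM (fun x ↦ by rw [hφ]; positivity)
    hφM (integrable_of_integral_eq_one hp_int) (integrable_of_integral_eq_one hφ_int)
    (hp_int.trans hφ_int.symm) hD_int hΔ_int

theorem relative_entropy_lower_bound (d : ℕ) (hd : 1 ≤ d)
    (p : EuclideanSpace ℝ (Fin d) → ℝ)
    (φ : EuclideanSpace ℝ (Fin d) → ℝ)
    (hφ : φ = fun x => (2 * π) ^ (-(d : ℝ) / 2) * Real.exp (-‖x‖ ^ 2 / 2))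
    (hp_meas : Measurable p) (hp_nonneg : ∀ x, 0 ≤ p x)
    (hp_int : ∫ x, p x = 1)
    (hmoment : ∫ x, ‖x‖ ^ 2 * p x = d)
    (M : ℝ) (hM : (2 * π) ^ (-(d : ℝ) / 2) ≤ M) (hpM : ∀ x, p x ≤ M)
    (hD_int : Integrable (fun x => p x * Real.log (p x / φ x)))
    (hΔ_int : Integrable (fun x => (p x - φ x) ^ 2)) :
    (∫ x, (p x - φ x) ^ 2) / (2 * M) ≤ ∫ x, p x * Real.log (p x / φ x) :=
  relative_entropy_lower_bound_general d p φ hφ hp_nonneg hp_int M hM hpM hD_int hΔ_int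
end

section
/- The function ψ(t) = log(1/t) + t − 1 satisfies ψ(t) ≥ (1/8)·min{|t − 1|, (t − 1)²} for all t > 0. -/
theorem psi_lower_bound (t : ℝ) (ht : 0 < t) :
    (1 / 8) * min |t - 1| ((t - 1) ^ 2) ≤ Real.log (1 / t) + t - 1 := by
  have hs : Real.sqrt t > 0 := Real.sqrt_pos.mpr ht
  have hst : Real.sqrt t ^ 2 = t := Real.sq_sqrt ht.le
  have hlog : Real.log t ≤ 2 * (Real.sqrt t - 1) := by
    have h1 : Real.log (Real.sqrt t) ≤ Real.sqrt t - 1 :=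
      Real.log_le_sub_one_of_pos hs
    have h2 : Real.log (Real.sqrt t) = Real.log t / 2 := Real.log_sqrt ht.le
    linarith
  rw [Real.log_div one_ne_zero (ne_of_gt ht), Real.log_one]
  set s := Real.sqrt t with hsdef
  rcases le_total t 2 with h2 | h2
  · have hmin : min |t - 1| ((t - 1) ^ 2) ≤ (t - 1) ^ 2 := min_le_right _ _
    have hs2 : s ^ 2 ≤ 2 := by rw [hst]; exact h2
    nlinarith [sq_nonneg (s - 1), sq_nonneg ((s - 1) * (s + 1)), sq_nonneg (s + 1), hst]
  · have habs : |t - 1| = t - 1 := abs_of_nonneg (by linarith)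
    have hmin : min |t - 1| ((t - 1) ^ 2) ≤ t - 1 := min_le_of_left_le habs.le
    have hs2 : 2 ≤ s ^ 2 := by rw [hst]; exact h2
    nlinarith [sq_nonneg (s - 1), hst, hs]
end

section
/- Let X be a random vector in ℝ^d with mean a, covariance matrix V whose eigenvalues are σ₁², …, σ_d², and finite relative entropy D = D(X‖Z) to the standard normal Z. Then: (a) |a|² ≤ 2D; (b) |σᵢ² − 1| ≤ 4√D + 16D for every i ≤ d; (c) |E|X|² − d| ≤ 4d√D + 16d·D. -/
/-!
For every Gaussian density `q`, Gibbs' inequality gives `∫ p log (q / φ) ≤ ∫ p log (p / φ) = D`.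
Taking for `q` the normal density with mean `a` and covariance `∑ⱼ sⱼ uⱼ uⱼᵀ`, where `uⱼ` is an
orthonormal eigenbasis of `V` with eigenvalues `vⱼ`, the left side is computed from the first two
moments of `p` alone:
  `‖a‖² / 2 + ∑ⱼ (vⱼ - vⱼ / sⱼ - log sⱼ) / 2 ≤ D`   for all `sⱼ > 0`.
Letting a single `sⱼ` tend to `0` shows `vⱼ > 0`; then `s = v` is the decomposition of `D` with the
term `D(X‖Y) ≥ 0` dropped, `‖a‖² / 2 + ∑ⱼ (vⱼ - 1 - log vⱼ) / 2 ≤ D`. The bounds follow from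
`t - 1 - log t ≥ min {|t - 1|, (t - 1)²} / 8` and `E‖X‖² = ∑ⱼ vⱼ + ‖a‖²`.
-/

open Real MeasureTheory Matrix ProbabilityTheory
open scoped RealInnerProductSpace NNReal

lemma min_abs_sub_one_sq_le {t : ℝ} (ht : 0 < t) :
    min |t - 1| ((t - 1) ^ 2) ≤ 8 * (t - 1 - log t) := by
  set r := √t
  have hr : 0 ≤ r := sqrt_nonneg t
  have hrt : r ^ 2 = t := sq_sqrt ht.le
  have hsqrt : (r - 1) ^ 2 ≤ t - 1 - log t := by
    nlinarith [log_sqrt ht.le, log_le_sub_one_of_pos (sqrt_pos.2 ht)]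
  have hmin : min |r ^ 2 - 1| ((r ^ 2 - 1) ^ 2) ≤ 8 * (r - 1) ^ 2 := by
    rcases le_or_gt ((r + 1) ^ 2) 8 with h | h
    · refine (min_le_right _ _).trans ?_
      nlinarith [mul_le_mul_of_nonneg_left h (sq_nonneg (r - 1))]
    · have h1 : r + 1 ≤ 8 * (r - 1) := by nlinarith
      refine (min_le_left _ _).trans ?_
      rw [abs_of_nonneg (by nlinarith)]
      nlinarith [mul_le_mul_of_nonneg_left h1 (by linarith : 0 ≤ r - 1)]
  rw [hrt] at hmin
  linarith

lemma abs_sub_one_le_of_sub_one_sub_log_le {t D : ℝ} (ht : 0 < t)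
    (h : t - 1 - log t ≤ 2 * D) : |t - 1| ≤ 4 * √D + 8 * (t - 1 - log t) := by
  have hg : 0 ≤ t - 1 - log t := by linarith [log_le_sub_one_of_pos ht]
  have hmin := min_abs_sub_one_sq_le ht
  rcases min_cases |t - 1| ((t - 1) ^ 2) with ⟨hm, -⟩ | ⟨hm, -⟩
  · linarith [sqrt_nonneg D]
  · have hsq : (t - 1) ^ 2 ≤ (4 * √D) ^ 2 := by
      rw [mul_pow, sq_sqrt (by linarith)]
      linarith
    linarith [abs_le_of_sq_le_sq hsq (by positivity)]

section SumsOverEigenvalues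

variable {ι : Type*} [Fintype ι] {v : ι → ℝ}

lemma pos_of_forall_sum_sub_div_sub_log_le {C : ℝ} (hv : ∀ j, 0 ≤ v j)
    (h : ∀ s : ι → ℝ, (∀ j, 0 < s j) → ∑ j, (v j - v j / s j - log (s j)) / 2 ≤ C) (j : ι) :
    0 < v j := by
  classical
  refine (hv j).lt_of_ne fun hv0 => ?_
  have := h (Function.update 1 j (exp (-2 * (C + 1))))
    fun k => by by_cases hk : k = j <;> simp [hk, exp_pos]
  rw [Finset.sum_eq_single j (fun k _ hk => by simp [hk]) (by simp)] at this
  simp only [Function.update_self, ← hv0, zero_div, log_exp] at this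
  linarith

lemma sub_one_sub_log_le_of_sum_le {A D : ℝ} (hv : ∀ j, 0 < v j) (hA : 0 ≤ A)
    (h : ∑ j, (v j - 1 - log (v j)) + A ≤ 2 * D) (j : ι) : v j - 1 - log (v j) ≤ 2 * D := by
  have hg : ∀ k, 0 ≤ v k - 1 - log (v k) := fun k => by linarith [log_le_sub_one_of_pos (hv k)]
  linarith [Finset.single_le_sum (fun k _ => hg k) (Finset.mem_univ j)]

lemma abs_sum_sub_one_add_le {A D : ℝ} (hv : ∀ j, 0 < v j) (hA : 0 ≤ A)
    (h : ∑ j, (v j - 1 - log (v j)) + A ≤ 2 * D) :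
    |∑ j, (v j - 1) + A| ≤ 4 * Fintype.card ι * √D + 16 * D := by
  calc |∑ j, (v j - 1) + A| ≤ ∑ j, |v j - 1| + A := by
        grw [abs_add_le, Finset.abs_sum_le_sum_abs, abs_of_nonneg hA]
    _ ≤ ∑ j, (4 * √D + 8 * (v j - 1 - log (v j))) + A := by
        gcongr with j
        exact abs_sub_one_le_of_sub_one_sub_log_le (hv j) (sub_one_sub_log_le_of_sum_le hv hA h j)
    _ ≤ 4 * Fintype.card ι * √D + 16 * D := by
        simp only [Finset.sum_add_distrib, ← Finset.mul_sum, Finset.sum_const,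
          Finset.card_univ, nsmul_eq_mul]
        linarith

end SumsOverEigenvalues

section DensityIntegrals

lemma sub_le_mul_log_div {p q : ℝ} (hp : 0 ≤ p) (hq : 0 < q) : p - q ≤ p * log (p / q) :=
  calc p - q = q * (p / q - 1) := by field_simp
    _ ≤ q * (p / q * log (p / q)) := by
      gcongr
      exact self_sub_one_le_mul_log (div_nonneg hp hq.le)
    _ = p * log (p / q) := by field_simp

variable {α : Type*} [MeasurableSpace α] {μ : Measure α}

theorem integral_mul_log_div_le_integral_mul_log_div {p q φ : α → ℝ}
    (hp : ∀ x, 0 ≤ p x) (hq : ∀ x, 0 < q x) (hφ : ∀ x, 0 < φ x)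
    (hp_int : Integrable p μ) (hq_int : Integrable q μ) (hqp : ∫ x, q x ∂μ ≤ ∫ x, p x ∂μ)
    (hpq_int : Integrable (fun x => p x * log (q x / φ x)) μ)
    (hpp_int : Integrable (fun x => p x * log (p x / φ x)) μ) :
    ∫ x, p x * log (q x / φ x) ∂μ ≤ ∫ x, p x * log (p x / φ x) ∂μ := by
  have hpt : ∀ x, p x - q x ≤ p x * log (p x / φ x) - p x * log (q x / φ x) := fun x => by
    rcases (hp x).eq_or_lt with h0 | hpos
    · simp [← h0, (hq x).le]
    · rw [← mul_sub, ← log_div (div_pos hpos (hφ x)).ne' (div_pos (hq x) (hφ x)).ne',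
        div_div_div_cancel_right₀ (hφ x).ne']
      exact sub_le_mul_log_div hpos.le (hq x)
  have := integral_mono (f := fun x => p x - q x)
    (g := fun x => p x * log (p x / φ x) - p x * log (q x / φ x))
    (hp_int.sub hq_int) (hpp_int.sub hpq_int) hpt
  rw [integral_sub hp_int hq_int, integral_sub hpp_int hpq_int] at this
  linarith

lemma integrable_mul_of_abs_le {p f g : α → ℝ} (hp0 : ∀ x, 0 ≤ p x) (hp : Integrable p μ)
    (hgp : Integrable (fun x => g x * p x) μ) (hf : AEStronglyMeasurable f μ) {A B : ℝ}
    (hfg : ∀ x, |f x| ≤ A + B * g x) : Integrable (fun x => f x * p x) μ := by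
  refine ((hp.const_mul A).add (hgp.const_mul B)).mono' (hf.mul hp.1) (ae_of_all _ fun x => ?_)
  rw [norm_mul, norm_of_nonneg (hp0 x), Real.norm_eq_abs]
  show |f x| * p x ≤ A * p x + B * (g x * p x)
  nlinarith [mul_le_mul_of_nonneg_right (hfg x) (hp0 x)]

lemma integral_quadratic_mul {p c : α → ℝ} (hp : Integrable p μ)
    (hc : Integrable (fun x => c x * p x) μ) (hc2 : Integrable (fun x => c x ^ 2 * p x) μ)
    (r s t : ℝ) :
    ∫ x, (r + s * c x + t * c x ^ 2) * p x ∂μ =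
      r * ∫ x, p x ∂μ + s * ∫ x, c x * p x ∂μ + t * ∫ x, c x ^ 2 * p x ∂μ := by
  simp_rw [add_mul, mul_assoc]
  rw [integral_add (f := fun x => r * p x + s * (c x * p x))
      ((hp.const_mul r).add (hc.const_mul s)) (hc2.const_mul t),
    integral_add (hp.const_mul r) (hc.const_mul s), integral_const_mul, integral_const_mul,
    integral_const_mul]

lemma integrable_quadratic_mul {p c : α → ℝ} (hp : Integrable p μ)
    (hc : Integrable (fun x => c x * p x) μ) (hc2 : Integrable (fun x => c x ^ 2 * p x) μ)
    (r s t : ℝ) : Integrable (fun x => (r + s * c x + t * c x ^ 2) * p x) μ :=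
  (((hp.const_mul r).add (hc.const_mul s)).add (hc2.const_mul t)).congr
    (ae_of_all _ fun x => by simp only [Pi.add_apply]; ring)

end DensityIntegrals

lemma log_gaussianPDFReal (b : ℝ) {s : ℝ≥0} (hs : s ≠ 0) (t : ℝ) :
    log (gaussianPDFReal b s t) = -(log (2 * π) + log s) / 2 - (t - b) ^ 2 / (2 * s) := by
  have hs' : (0 : ℝ) < s := by positivity
  rw [gaussianPDFReal, log_mul (by positivity) (exp_pos _).ne', log_inv, log_exp,
    log_sqrt (by positivity), log_mul (by positivity) hs'.ne']
  ring

lemma log_gaussianPDFReal_div_gaussianPDFReal_zero_one (b : ℝ) {s : ℝ≥0} (hs : s ≠ 0) (t : ℝ) :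
    log (gaussianPDFReal b s t / gaussianPDFReal 0 1 t) =
      (b ^ 2 - log s) / 2 + b * (t - b) + (1 - 1 / s) / 2 * (t - b) ^ 2 := by
  rw [log_div (gaussianPDFReal_pos _ _ _ hs).ne' (gaussianPDFReal_pos _ _ _ one_ne_zero).ne',
    log_gaussianPDFReal b hs, log_gaussianPDFReal 0 one_ne_zero, NNReal.coe_one, log_one]
  have hs' : (s : ℝ) ≠ 0 := by positivity
  field_simp
  ring

namespace OrthonormalBasis

variable {ι : Type*} [Fintype ι] (u : OrthonormalBasis ι ℝ (EuclideanSpace ℝ ι))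

theorem integrable_prod_repr {f : ι → ℝ → ℝ} (hf : ∀ j, Integrable (f j)) :
    Integrable fun x => ∏ j, f j (u.repr x j) :=
  ((u.measurePreserving_measurableEquiv.trans
    (EuclideanSpace.volume_preserving_symm_measurableEquiv_toLp ι)).integrable_comp_emb
    (MeasurableEquiv.measurableEmbedding _)).2 (Integrable.fintype_prod hf)

theorem integral_prod_repr (f : ι → ℝ → ℝ) :
    ∫ x, ∏ j, f j (u.repr x j) = ∏ j, ∫ t, f j t :=
  ((u.measurePreserving_measurableEquiv.trans
    (EuclideanSpace.volume_preserving_symm_measurableEquiv_toLp ι)).integral_comp'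
    fun y : ι → ℝ => ∏ j, f j (y j)).trans (integral_fintype_prod_volume_eq_prod f)

/-- The normal density with mean `m` and covariance matrix `∑ j, s j • |u j⟩⟨u j|`. -/
noncomputable def gaussianPDF (m : EuclideanSpace ℝ ι) (s : ι → ℝ≥0) (x : EuclideanSpace ℝ ι) :
    ℝ :=
  ∏ j, gaussianPDFReal ⟪u j, m⟫ (s j) (u.repr x j)

variable {u}

lemma gaussianPDF_pos (m : EuclideanSpace ℝ ι) {s : ι → ℝ≥0} (hs : ∀ j, s j ≠ 0)
    (x : EuclideanSpace ℝ ι) : 0 < u.gaussianPDF m s x :=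
  Finset.prod_pos fun j _ => gaussianPDFReal_pos _ _ _ (hs j)

lemma integrable_gaussianPDF (m : EuclideanSpace ℝ ι) (s : ι → ℝ≥0) :
    Integrable (u.gaussianPDF m s) :=
  u.integrable_prod_repr fun _ => integrable_gaussianPDFReal _ _

lemma integral_gaussianPDF (m : EuclideanSpace ℝ ι) {s : ι → ℝ≥0} (hs : ∀ j, s j ≠ 0) :
    ∫ x, u.gaussianPDF m s x = 1 := by
  simp only [gaussianPDF, integral_prod_repr]
  exact Finset.prod_eq_one fun j _ => integral_gaussianPDFReal_eq_one _ (hs j)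

lemma gaussianPDF_zero_one (x : EuclideanSpace ℝ ι) :
    u.gaussianPDF 0 1 x = (2 * π) ^ (-(Fintype.card ι : ℝ) / 2) * exp (-‖x‖ ^ 2 / 2) := by
  simp only [gaussianPDF, inner_zero_right, Pi.one_apply, gaussianPDFReal, NNReal.coe_one,
    mul_one, sub_zero, Finset.prod_mul_distrib, Finset.prod_const, Finset.card_univ, ← exp_sum,
    ← Finset.sum_div]
  congr 1
  · rw [sqrt_eq_rpow, ← rpow_neg (by positivity), ← rpow_natCast, ← rpow_mul (by positivity)]
    ring_nf
  · rw [Finset.sum_neg_distrib, ← EuclideanSpace.real_norm_sq_eq, LinearIsometryEquiv.norm_map]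

lemma log_gaussianPDF_div_gaussianPDF_zero_one (m : EuclideanSpace ℝ ι) {s : ι → ℝ≥0}
    (hs : ∀ j, s j ≠ 0) (x : EuclideanSpace ℝ ι) :
    log (u.gaussianPDF m s x / u.gaussianPDF 0 1 x) =
      ∑ j, ((⟪u j, m⟫ ^ 2 - log (s j)) / 2 + ⟪u j, m⟫ * ⟪u j, x - m⟫
        + (1 - 1 / s j) / 2 * ⟪u j, x - m⟫ ^ 2) := by
  simp only [gaussianPDF, ← Finset.prod_div_distrib, inner_zero_right, Pi.one_apply]
  rw [log_prod fun j _ => (div_pos (gaussianPDFReal_pos _ _ _ (hs j))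
    (gaussianPDFReal_pos _ _ _ one_ne_zero)).ne']
  simp only [log_gaussianPDFReal_div_gaussianPDFReal_zero_one _ (hs _),
    OrthonormalBasis.repr_apply_apply, inner_sub_right]

end OrthonormalBasis

section QuadraticGrowth

variable {E : Type*} [NormedAddCommGroup E] [MeasurableSpace E]
  [OpensMeasurableSpace E] {μ : Measure E} {p : E → ℝ}

lemma integrable_norm_sub_sq_mul (hp0 : ∀ x, 0 ≤ p x) (hp : Integrable p μ)
    (hp2 : Integrable (fun x => ‖x‖ ^ 2 * p x) μ) (a : E) :
    Integrable (fun x => ‖x - a‖ ^ 2 * p x) μ :=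
  integrable_mul_of_abs_le hp0 hp hp2 (f := fun x => ‖x - a‖ ^ 2)
    (by fun_prop : Continuous _).aestronglyMeasurable (A := 2 * ‖a‖ ^ 2) (B := 2) fun x => by
    rw [abs_of_nonneg (by positivity)]
    nlinarith [norm_sub_le x a, norm_nonneg (x - a), sq_nonneg (‖x‖ - ‖a‖)]

lemma integrable_inner_sub_mul [InnerProductSpace ℝ E] (hp0 : ∀ x, 0 ≤ p x)
    (hp : Integrable p μ) {a : E} (hpa : Integrable (fun x => ‖x - a‖ ^ 2 * p x) μ) (w : E) :
    Integrable (fun x => ⟪w, x - a⟫ * p x) μ :=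
  integrable_mul_of_abs_le hp0 hp hpa (f := fun x => ⟪w, x - a⟫)
    (by fun_prop : Continuous _).aestronglyMeasurable (A := ‖w‖) (B := ‖w‖) fun x => by
    nlinarith [abs_real_inner_le_norm w (x - a), norm_nonneg w, sq_nonneg (‖x - a‖ - 1)]

lemma integrable_inner_sub_sq_mul [InnerProductSpace ℝ E] (hp0 : ∀ x, 0 ≤ p x)
    (hp : Integrable p μ) {a : E} (hpa : Integrable (fun x => ‖x - a‖ ^ 2 * p x) μ) (w : E) :
    Integrable (fun x => ⟪w, x - a⟫ ^ 2 * p x) μ :=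
  integrable_mul_of_abs_le hp0 hp hpa (f := fun x => ⟪w, x - a⟫ ^ 2)
    (by fun_prop : Continuous _).aestronglyMeasurable (A := 0) (B := ‖w‖ ^ 2) fun x => by
    rw [abs_pow, zero_add, ← mul_pow]
    exact pow_le_pow_left₀ (abs_nonneg _) (abs_real_inner_le_norm w (x - a)) 2

end QuadraticGrowth

section Coordinates

variable {ι : Type*} [Fintype ι] {p : EuclideanSpace ℝ ι → ℝ}

lemma integrable_apply_mul (hp0 : ∀ x, 0 ≤ p x) (hp : Integrable p)
    (hp2 : Integrable fun x => ‖x‖ ^ 2 * p x) (i : ι) : Integrable fun x => x i * p x :=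
  integrable_mul_of_abs_le hp0 hp hp2 (f := fun x => x i) (by fun_prop) (A := 1) (B := 1)
    fun x => by
    nlinarith [PiLp.norm_apply_le x i, Real.norm_eq_abs (x i), sq_nonneg (‖x‖ - 1)]

lemma integrable_apply_sub_mul_apply_sub_mul (hp0 : ∀ x, 0 ≤ p x) (hp : Integrable p)
    {a : EuclideanSpace ℝ ι} (hpa : Integrable fun x => ‖x - a‖ ^ 2 * p x) (i k : ι) :
    Integrable fun x => (x i - a i) * (x k - a k) * p x :=
  integrable_mul_of_abs_le hp0 hp hpa (f := fun x => (x i - a i) * (x k - a k)) (by fun_prop)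
    (A := 0) (B := 1) fun x => by
    have hi := PiLp.norm_apply_le (x - a) i
    have hk := PiLp.norm_apply_le (x - a) k
    simp only [PiLp.sub_apply, Real.norm_eq_abs] at hi hk
    rw [abs_mul, zero_add, one_mul, sq]
    exact mul_le_mul hi hk (abs_nonneg _) (norm_nonneg _)

lemma EuclideanSpace.real_inner_eq_sum_mul (w x : EuclideanSpace ℝ ι) :
    ⟪w, x⟫ = ∑ i, w i * x i := by
  simp [PiLp.inner_apply, mul_comm]

lemma integral_inner_sub_mul_eq_zero (hp : ∫ x, p x = 1)
    (hxi : ∀ i, Integrable fun x => x i * p x) {a : EuclideanSpace ℝ ι}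
    (ha : ∀ i, ∫ x, x i * p x = a i) (w : EuclideanSpace ℝ ι) :
    ∫ x, ⟪w, x - a⟫ * p x = 0 := by
  have hsplit : ∀ x, ⟪w, x - a⟫ * p x = ∑ i, w i * (x i * p x) - ⟪w, a⟫ * p x := fun x => by
    rw [inner_sub_right, sub_mul, EuclideanSpace.real_inner_eq_sum_mul w x, Finset.sum_mul]
    simp only [mul_assoc]
  rw [integral_congr_ae (ae_of_all _ hsplit),
    integral_sub (integrable_finsetSum _ fun i _ => (hxi i).const_mul _)
      ((integrable_of_integral_eq_one hp).const_mul _),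
    integral_finsetSum _ fun i _ => (hxi i).const_mul _, integral_const_mul, hp,
    EuclideanSpace.real_inner_eq_sum_mul]
  simp only [integral_const_mul, ha, mul_one, sub_self]

lemma integral_inner_sub_sq_mul {a : EuclideanSpace ℝ ι}
    (hxik : ∀ i k, Integrable fun x => (x i - a i) * (x k - a k) * p x)
    {V : Matrix ι ι ℝ} (hV : ∀ i k, ∫ x, (x i - a i) * (x k - a k) * p x = V i k)
    (w : EuclideanSpace ℝ ι) :
    ∫ x, ⟪w, x - a⟫ ^ 2 * p x = w.ofLp ⬝ᵥ V *ᵥ w.ofLp := by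
  have hsplit : ∀ x, ⟪w, x - a⟫ ^ 2 * p x =
      ∑ i, ∑ k, w i * w k * ((x i - a i) * (x k - a k) * p x) := fun x => by
    rw [EuclideanSpace.real_inner_eq_sum_mul, sq, Finset.sum_mul_sum, Finset.sum_mul]
    refine Finset.sum_congr rfl fun i _ => ?_
    rw [Finset.sum_mul]
    exact Finset.sum_congr rfl fun k _ => by simp only [PiLp.sub_apply]; ring
  rw [integral_congr_ae (ae_of_all _ hsplit), integral_finsetSum _ fun i _ =>
    integrable_finsetSum _ fun k _ => (hxik i k).const_mul _]
  simp only [dotProduct, mulVec, Finset.mul_sum]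
  refine Finset.sum_congr rfl fun i _ => ?_
  rw [integral_finsetSum _ fun k _ => (hxik i k).const_mul _]
  simp only [integral_const_mul, hV]
  exact Finset.sum_congr rfl fun k _ => by ring

end Coordinates

section Moments

variable {ι : Type*} [Fintype ι] (u : OrthonormalBasis ι ℝ (EuclideanSpace ℝ ι))
  {p : EuclideanSpace ℝ ι → ℝ} {a : EuclideanSpace ℝ ι} {v : ι → ℝ}
  (hp : ∫ x, p x = 1)
  (hc : ∀ j, Integrable fun x => ⟪u j, x - a⟫ * p x)
  (hc2 : ∀ j, Integrable fun x => ⟪u j, x - a⟫ ^ 2 * p x)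
  (hmean : ∀ j, ∫ x, ⟪u j, x - a⟫ * p x = 0)
  (hvar : ∀ j, ∫ x, ⟪u j, x - a⟫ ^ 2 * p x = v j)
include hp hc hc2 hmean hvar

theorem integral_norm_sq_mul : ∫ x, ‖x‖ ^ 2 * p x = ∑ j, v j + ‖a‖ ^ 2 := by
  have hp_int : Integrable p := integrable_of_integral_eq_one hp
  have hsplit : ∀ x, ‖x‖ ^ 2 * p x =
      ∑ j, (⟪u j, a⟫ ^ 2 + 2 * ⟪u j, a⟫ * ⟪u j, x - a⟫ + 1 * ⟪u j, x - a⟫ ^ 2) * p x := fun x => by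
    rw [← u.sum_sq_inner_right x, Finset.sum_mul]
    refine Finset.sum_congr rfl fun j _ => ?_
    rw [inner_sub_right]
    ring
  rw [integral_congr_ae (ae_of_all _ hsplit),
    integral_finsetSum _ fun j _ => integrable_quadratic_mul hp_int (hc j) (hc2 j) _ _ _,
    ← u.sum_sq_inner_right a, ← Finset.sum_add_distrib]
  refine Finset.sum_congr rfl fun j _ => ?_
  rw [integral_quadratic_mul hp_int (hc j) (hc2 j), hp, hmean, hvar]
  ring

theorem sum_sub_div_sub_log_add_norm_sq_le_integral_mul_log (hp0 : ∀ x, 0 ≤ p x)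
    (hD : Integrable fun x => p x * log (p x / u.gaussianPDF 0 1 x))
    {s : ι → ℝ} (hs : ∀ j, 0 < s j) :
    ∑ j, (v j - v j / s j - log (s j)) / 2 + ‖a‖ ^ 2 / 2 ≤
      ∫ x, p x * log (p x / u.gaussianPDF 0 1 x) := by
  set s' : ι → ℝ≥0 := fun j => (s j).toNNReal
  have hs' : ∀ j, s' j ≠ 0 := fun j => (Real.toNNReal_pos.2 (hs j)).ne'
  have hs'_coe : ∀ j, (s' j : ℝ) = s j := fun j => Real.coe_toNNReal _ (hs j).le
  have hp_int : Integrable p := integrable_of_integral_eq_one hp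
  have hquad : ∀ j, Integrable fun x => ((⟪u j, a⟫ ^ 2 - log (s' j)) / 2
      + ⟪u j, a⟫ * ⟪u j, x - a⟫ + (1 - 1 / s' j) / 2 * ⟪u j, x - a⟫ ^ 2) * p x :=
    fun j => integrable_quadratic_mul hp_int (hc j) (hc2 j) _ _ _
  have hlog : ∀ x, p x * log (u.gaussianPDF a s' x / u.gaussianPDF 0 1 x) =
      ∑ j, ((⟪u j, a⟫ ^ 2 - log (s' j)) / 2
        + ⟪u j, a⟫ * ⟪u j, x - a⟫ + (1 - 1 / s' j) / 2 * ⟪u j, x - a⟫ ^ 2) * p x := fun x => by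
    rw [OrthonormalBasis.log_gaussianPDF_div_gaussianPDF_zero_one a hs', Finset.mul_sum]
    simp only [mul_comm (p x)]
  calc ∑ j, (v j - v j / s j - log (s j)) / 2 + ‖a‖ ^ 2 / 2
      = ∑ j, ((⟪u j, a⟫ ^ 2 - log (s j)) / 2 * 1 + ⟪u j, a⟫ * 0 + (1 - 1 / s j) / 2 * v j) := by
        rw [← u.sum_sq_inner_right a, Finset.sum_div, ← Finset.sum_add_distrib]
        refine Finset.sum_congr rfl fun j _ => ?_
        field_simp
        ring
    _ = ∑ j, ∫ x, ((⟪u j, a⟫ ^ 2 - log (s' j)) / 2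
          + ⟪u j, a⟫ * ⟪u j, x - a⟫ + (1 - 1 / s' j) / 2 * ⟪u j, x - a⟫ ^ 2) * p x :=
        Finset.sum_congr rfl fun j _ => by
          rw [integral_quadratic_mul hp_int (hc j) (hc2 j), hp, hmean, hvar, hs'_coe]
    _ = ∫ x, p x * log (u.gaussianPDF a s' x / u.gaussianPDF 0 1 x) := by
        rw [integral_congr_ae (ae_of_all _ hlog), integral_finsetSum _ fun j _ => hquad j]
    _ ≤ ∫ x, p x * log (p x / u.gaussianPDF 0 1 x) :=
        integral_mul_log_div_le_integral_mul_log_div hp0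
          (OrthonormalBasis.gaussianPDF_pos a hs')
          (OrthonormalBasis.gaussianPDF_pos 0 fun _ => one_ne_zero)
          hp_int (OrthonormalBasis.integrable_gaussianPDF a s')
          (by rw [OrthonormalBasis.integral_gaussianPDF a hs', hp])
          ((integrable_finsetSum _ fun j _ => hquad j).congr
            (ae_of_all _ fun x => (hlog x).symm)) hD

end Moments

theorem moment_bounds_from_relative_entropy_general (d : ℕ) (hd : 1 ≤ d)
    (p : EuclideanSpace ℝ (Fin d) → ℝ)
    (φ : EuclideanSpace ℝ (Fin d) → ℝ)
    (hφ : φ = fun x => (2 * π) ^ (-(d : ℝ) / 2) * Real.exp (-‖x‖ ^ 2 / 2))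
    (hp_nonneg : ∀ x, 0 ≤ p x)
    (hp_int : ∫ x, p x = 1)
    (hp2_int : Integrable (fun x => ‖x‖ ^ 2 * p x))
    (a : EuclideanSpace ℝ (Fin d)) (V : Matrix (Fin d) (Fin d) ℝ)
    (hV : V.IsHermitian)
    (ha : ∀ i, ∫ x, x i * p x = a i)
    (hVcov : ∀ i j, ∫ x, (x i - a i) * (x j - a j) * p x = V i j)
    (σ : Fin d → ℝ) (hσ : ∀ i, hV.eigenvalues i = σ i ^ 2)
    (D : ℝ) (hD : D = ∫ x, p x * Real.log (p x / φ x))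
    (hD_int : Integrable (fun x => p x * Real.log (p x / φ x))) :
    ‖a‖ ^ 2 ≤ 2 * D ∧
    (∀ i, |σ i ^ 2 - 1| ≤ 4 * Real.sqrt D + 16 * D) ∧
    |(∫ x, ‖x‖ ^ 2 * p x) - d| ≤ 4 * d * Real.sqrt D + 16 * d * D := by
  set u := hV.eigenvectorBasis
  set v := hV.eigenvalues
  have hp : Integrable p := integrable_of_integral_eq_one hp_int
  have hpa := integrable_norm_sub_sq_mul hp_nonneg hp hp2_int a
  have hc := fun j => integrable_inner_sub_mul hp_nonneg hp hpa (u j)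
  have hc2 := fun j => integrable_inner_sub_sq_mul hp_nonneg hp hpa (u j)
  have hmean := fun j => integral_inner_sub_mul_eq_zero hp_int
    (integrable_apply_mul hp_nonneg hp hp2_int) ha (u j)
  have hvar : ∀ j, ∫ x, ⟪u j, x - a⟫ ^ 2 * p x = v j := fun j => by
    rw [integral_inner_sub_sq_mul
      (integrable_apply_sub_mul_apply_sub_mul hp_nonneg hp hpa) hVcov]
    simpa using (hV.eigenvalues_eq j).symm
  have hφu : φ = u.gaussianPDF 0 1 := by
    funext x
    simp [hφ, OrthonormalBasis.gaussianPDF_zero_one]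
  rw [hφu] at hD hD_int
  have key := fun s hs => hD ▸ sum_sub_div_sub_log_add_norm_sq_le_integral_mul_log u hp_int hc hc2
    hmean hvar hp_nonneg hD_int (s := s) hs
  have ha2 : ‖a‖ ^ 2 ≤ 2 * D := by
    have := key 1 fun _ => one_pos
    simp only [Pi.one_apply, div_one, sub_self, log_one, zero_div, Finset.sum_const_zero] at this
    linarith
  have hv_pos : ∀ j, 0 < v j := pos_of_forall_sum_sub_div_sub_log_le (C := D)
    (fun j => hvar j ▸ integral_nonneg fun x => mul_nonneg (sq_nonneg _) (hp_nonneg x))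
    fun s hs => by linarith [key s hs, sq_nonneg ‖a‖]
  have hsum : ∑ j, (v j - 1 - log (v j)) + ‖a‖ ^ 2 ≤ 2 * D := by
    have := key v hv_pos
    simp only [div_self (hv_pos _).ne', ← Finset.sum_div] at this
    linarith
  have hD0 : 0 ≤ D := by linarith [sq_nonneg ‖a‖]
  refine ⟨ha2, fun i => ?_, ?_⟩
  · rw [← hσ i]
    have hg := sub_one_sub_log_le_of_sum_le hv_pos (sq_nonneg ‖a‖) hsum i
    linarith [abs_sub_one_le_of_sub_one_sub_log_le (hv_pos i) hg]
  · have h2 : (∫ x, ‖x‖ ^ 2 * p x) - d = ∑ j, (v j - 1) + ‖a‖ ^ 2 := by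
      rw [integral_norm_sq_mul u hp_int hc hc2 hmean hvar, Finset.sum_sub_distrib,
        Finset.sum_const, Finset.card_univ, Fintype.card_fin, nsmul_one]
      ring
    have hd' : (1 : ℝ) ≤ d := by exact_mod_cast hd
    have := abs_sum_sub_one_add_le hv_pos (sq_nonneg ‖a‖) hsum
    rw [Fintype.card_fin] at this
    rw [h2]
    linarith [mul_le_mul_of_nonneg_right hd' hD0]

theorem moment_bounds_from_relative_entropy (d : ℕ) (hd : 1 ≤ d)
    (p : EuclideanSpace ℝ (Fin d) → ℝ)
    (φ : EuclideanSpace ℝ (Fin d) → ℝ)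
    (hφ : φ = fun x => (2 * π) ^ (-(d : ℝ) / 2) * Real.exp (-‖x‖ ^ 2 / 2))
    (hp_meas : Measurable p) (hp_nonneg : ∀ x, 0 ≤ p x)
    (hp_int : ∫ x, p x = 1)
    (hp2_int : Integrable (fun x => ‖x‖ ^ 2 * p x))
    (a : EuclideanSpace ℝ (Fin d)) (V : Matrix (Fin d) (Fin d) ℝ)
    (hV : V.IsHermitian)
    (ha : ∀ i, ∫ x, x i * p x = a i)
    (hVcov : ∀ i j, ∫ x, (x i - a i) * (x j - a j) * p x = V i j)
    (σ : Fin d → ℝ) (hσ : ∀ i, hV.eigenvalues i = σ i ^ 2)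
    (D : ℝ) (hD : D = ∫ x, p x * Real.log (p x / φ x))
    (hD_int : Integrable (fun x => p x * Real.log (p x / φ x))) :
    ‖a‖ ^ 2 ≤ 2 * D ∧
    (∀ i, |σ i ^ 2 - 1| ≤ 4 * Real.sqrt D + 16 * D) ∧
    |(∫ x, ‖x‖ ^ 2 * p x) - d| ≤ 4 * d * Real.sqrt D + 16 * d * D :=
  moment_bounds_from_relative_entropy_general d hd p φ hφ hp_nonneg hp_int hp2_int a V hV ha hVcov σ
    hσ D hD hD_int
end

section
/- Let X be a continuous random vector in ℝ^d with density p and finite differential entropy h(X), and let Y be a discrete random vector in ℝ^d independent of X, taking values y_k with probabilities p_k and finite Shannon entropy H(Y). Then X + Y is absolutely continuous with density q(z) = Σ_k p_k p(z − y_k), and h(X + Y) ≤ h(X) + H(Y). -/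
/-
By independence the law of `X + Y` is the convolution of the two laws, and convolving
`volume.withDensity p` with `∑ w k • δ (y k)` gives the mixture of translates
`q = ∑ w k * p (· - y k)`.
For the entropy put `f k = w k * p (· - y k) ≤ q`. Monotonicity of `log` gives
`-q log q = ∑ f k * (-log q) ≤ ∑ -f k log f k` pointwise, and
`-f k log f k = p (· - y k) * (-w k log w k) + w k * (-p log p) (· - y k)` integrates to
`-w k log w k + w k * h(X)`. Concavity of `-x log x` gives the lower bound
`-q log q ≥ ∑ w k * (-p log p) (· - y k)`. Squeezed between these two integrable bounds, `q log q`
is integrable, so its Bochner integral is not the junk value `0`.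
-/

open Real MeasureTheory ProbabilityTheory
open scoped ENNReal

theorem summable_of_tsum_ne_zero {ι α : Type*} [AddCommMonoid α] [TopologicalSpace α] {f : ι → α}
    (h : ∑' k, f k ≠ 0) : Summable f := by
  by_contra hf
  exact h (tsum_eq_zero_of_not_summable hf)

section Translates

variable {G : Type*} [MeasurableSpace G] [AddGroup G] [MeasurableAdd G] {μ : Measure G}
  [μ.IsAddRightInvariant]

theorem map_add_right_withDensity (f : G → ℝ≥0∞) (y : G) :
    (μ.withDensity f).map (· + y) = μ.withDensity (fun z => f (z - y)) := by
  ext s hs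
  have hs' : MeasurableSet ((· + y) ⁻¹' s) := measurable_add_const y hs
  rw [Measure.map_apply (measurable_add_const y) hs, withDensity_apply _ hs',
    withDensity_apply _ hs, ← lintegral_indicator hs', ← lintegral_indicator hs]
  conv_rhs => rw [← lintegral_add_right_eq_self _ y]
  congr with x
  simp only [Set.indicator, add_sub_cancel_right]
  rfl

theorem withDensity_conv_sum_smul_dirac [MeasurableAdd₂ G] [SFinite μ] {ι : Type*} [Countable ι]
    {f : G → ℝ≥0∞} (hf : Measurable f) (c : ι → ℝ≥0∞) (y : ι → G) :
    μ.withDensity f ∗ Measure.sum (fun k => c k • Measure.dirac (y k))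
      = μ.withDensity (fun z => ∑' k, c k * f (z - y k)) := by
  have hf_sub (k : ι) : Measurable fun z => f (z - y k) := by
    simp_rw [sub_eq_add_neg]; exact hf.comp (measurable_add_const _)
  have hsum : (fun z => ∑' k, c k * f (z - y k)) = ∑' k, fun z => c k * f (z - y k) := by
    ext z; exact (ENNReal.tsum_apply (f := fun k z => c k * f (z - y k))).symm
  rw [hsum, withDensity_tsum fun k => (hf_sub k).const_mul (c k), Measure.conv,
    Measure.prod_sum_right, Measure.map_sum measurable_add.aemeasurable]
  congr with k : 1
  rw [Measure.prod_smul_right, Measure.map_smul, ← Measure.conv, Measure.conv_dirac,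
    map_add_right_withDensity, ← withDensity_smul _ (hf_sub k)]
  rfl

end Translates

section SummableIntegralNorm

variable {α E ι : Type*} [MeasurableSpace α] {μ : Measure α} [NormedAddCommGroup E]
  {F : ι → α → E}

theorem tsum_ofReal_integral_norm_ne_top (hsum : Summable fun i => ∫ a, ‖F i a‖ ∂μ) :
    ∑' i, ENNReal.ofReal (∫ a, ‖F i a‖ ∂μ) ≠ ∞ := by
  rw [← ENNReal.ofReal_tsum_of_nonneg (fun i => integral_nonneg fun a => norm_nonneg _) hsum]
  exact ENNReal.ofReal_ne_top

variable [CompleteSpace E] [Countable ι]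

theorem ae_summable_of_summable_integral_norm (hF : ∀ i, Integrable (F i) μ)
    (hsum : Summable fun i => ∫ a, ‖F i a‖ ∂μ) :
    ∀ᵐ a ∂μ, Summable fun i => F i a := by
  have := summable_norm_of_tsum_eLpNorm_ne_top le_rfl (fun i => (hF i).1) (by
    simp_rw [eLpNorm_one_eq_lintegral_enorm, ← ofReal_integral_norm_eq_lintegral_enorm (hF _)]
    exact tsum_ofReal_integral_norm_ne_top hsum)
  filter_upwards [this] with a ha using ha.of_norm

theorem integrable_tsum_of_summable_integral_norm (hF : ∀ i, Integrable (F i) μ)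
    (hsum : Summable fun i => ∫ a, ‖F i a‖ ∂μ) :
    Integrable (fun a => ∑' i, F i a) μ := by
  have hnorm : ∑' i, ‖(hF i).toL1 (F i)‖ₑ ≠ ∞ := by
    simpa only [← ofReal_norm, L1.norm_of_fun_eq_integral_norm]
      using tsum_ofReal_integral_norm_ne_top hsum
  refine (L1.integrable_coeFn (∑' i, (hF i).toL1 (F i))).congr ?_
  filter_upwards [Lp.coeFn_tsum hnorm, ae_all_iff.2 fun i => (hF i).coeFn_toL1] with a ha ha'
  rw [ha]
  exact tsum_congr ha'

end SummableIntegralNorm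

section NegMulLog

variable {ι : Type*} {w a : ι → ℝ}

-- The tangent line of the concave function `negMulLog` at `b` lies above its graph.
theorem negMulLog_le_sub_sub_mul_log {x b : ℝ} (hx : 0 ≤ x) (hb : 0 < b) :
    negMulLog x ≤ b - x - x * log b := by
  calc negMulLog x = x / b * negMulLog b + b * negMulLog (x / b) := by
        rw [← negMulLog_mul, mul_div_cancel₀ _ hb.ne']
    _ ≤ x / b * negMulLog b + b * (1 - x / b) := by
        gcongr; exact negMulLog_le_one_sub_self (div_nonneg hx hb.le)
    _ = b - x - x * log b := by
        unfold negMulLog; field_simp; ring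

theorem negMulLog_tsum_le_tsum_negMulLog (ha : ∀ k, 0 ≤ a k) (hs : Summable a)
    (hφ : Summable fun k => negMulLog (a k)) :
    negMulLog (∑' k, a k) ≤ ∑' k, negMulLog (a k) := by
  calc negMulLog (∑' k, a k) = ∑' k, -a k * log (∑' j, a j) := by
        rw [tsum_mul_right, tsum_neg]; rfl
    _ ≤ ∑' k, negMulLog (a k) := by
        refine (hs.neg.mul_right _).tsum_le_tsum (fun k => ?_) hφ
        rcases (ha k).eq_or_lt with h0 | hpos
        · simp [← h0]
        · have := log_le_log hpos (hs.le_tsum k fun j _ => ha j)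
          unfold negMulLog; nlinarith

theorem negMulLog_tsum_mul_le (hw : ∀ k, 0 ≤ w k) (ha : ∀ k, 0 ≤ a k)
    (hwa : Summable fun k => w k * a k) (hφw : Summable fun k => negMulLog (w k) * a k)
    (hwφ : Summable fun k => w k * negMulLog (a k)) :
    negMulLog (∑' k, w k * a k) ≤ ∑' k, negMulLog (w k) * a k + ∑' k, w k * negMulLog (a k) := by
  have hmul k : negMulLog (w k * a k) = negMulLog (w k) * a k + w k * negMulLog (a k) := by
    rw [negMulLog_mul, mul_comm (a k)]
  rw [← hφw.tsum_add hwφ, ← tsum_congr hmul]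
  exact negMulLog_tsum_le_tsum_negMulLog (fun k => mul_nonneg (hw k) (ha k)) hwa
    ((hφw.add hwφ).congr fun k => (hmul k).symm)

theorem tsum_mul_negMulLog_le_negMulLog_tsum (hw : ∀ k, 0 ≤ w k) (hw1 : ∑' k, w k = 1)
    (ha : ∀ k, 0 ≤ a k) (hwa : Summable fun k => w k * a k)
    (hwφ : Summable fun k => w k * negMulLog (a k)) :
    ∑' k, w k * negMulLog (a k) ≤ negMulLog (∑' k, w k * a k) := by
  set b := ∑' k, w k * a k
  have hwa_nonneg k : 0 ≤ w k * a k := mul_nonneg (hw k) (ha k)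
  rcases (tsum_nonneg hwa_nonneg).eq_or_lt with hb | hb
  · have hzero k : w k * a k = 0 :=
      le_antisymm (hb ▸ hwa.le_tsum k fun j _ => hwa_nonneg j) (hwa_nonneg k)
    have hterm k : w k * negMulLog (a k) = 0 := by
      rw [negMulLog, ← mul_assoc, mul_neg, hzero, neg_zero, zero_mul]
    rw [tsum_congr hterm, tsum_zero, show b = 0 from hb.symm, negMulLog_zero]
  · have hw_summable : Summable w := summable_of_tsum_ne_zero (hw1 ▸ one_ne_zero)
    have htangent : Summable fun k => w k * b - w k * a k - w k * a k * log b :=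
      ((hw_summable.mul_right b).sub hwa).sub (hwa.mul_right _)
    calc ∑' k, w k * negMulLog (a k) ≤ ∑' k, (w k * b - w k * a k - w k * a k * log b) := by
          refine hwφ.tsum_le_tsum (fun k => ?_) htangent
          have := mul_le_mul_of_nonneg_left (negMulLog_le_sub_sub_mul_log (ha k) hb) (hw k)
          linarith
      _ = negMulLog b := by
          rw [((hw_summable.mul_right b).sub hwa).tsum_sub (hwa.mul_right _),
            (hw_summable.mul_right b).tsum_sub hwa, tsum_mul_right, tsum_mul_right, hw1, negMulLog]
          ring

end NegMulLog

section TranslateMixture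

variable {G ι : Type*} [MeasurableSpace G] [AddGroup G] [MeasurableAdd G] {μ : Measure G}
  [μ.IsAddRightInvariant] {g : G → ℝ} {a : ι → ℝ}

theorem summable_integral_norm_mul_comp_sub (ha : Summable a) (y : ι → G) :
    Summable fun k => ∫ z, ‖a k * g (z - y k)‖ ∂μ := by
  simp_rw [norm_mul, integral_const_mul, integral_sub_right_eq_self (fun z => ‖g z‖)]
  exact ha.norm.mul_right _

variable [Countable ι]

theorem ae_summable_mul_comp_sub (hg : Integrable g μ) (ha : Summable a) (y : ι → G) :
    ∀ᵐ z ∂μ, Summable fun k => a k * g (z - y k) :=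
  ae_summable_of_summable_integral_norm (fun k => (hg.comp_sub_right (y k)).const_mul (a k))
    (summable_integral_norm_mul_comp_sub ha y)

theorem integrable_tsum_mul_comp_sub (hg : Integrable g μ) (ha : Summable a) (y : ι → G) :
    Integrable (fun z => ∑' k, a k * g (z - y k)) μ :=
  integrable_tsum_of_summable_integral_norm (fun k => (hg.comp_sub_right (y k)).const_mul (a k))
    (summable_integral_norm_mul_comp_sub ha y)

theorem integral_tsum_mul_comp_sub (hg : Integrable g μ) (ha : Summable a) (y : ι → G) :
    ∫ z, ∑' k, a k * g (z - y k) ∂μ = (∑' k, a k) * ∫ z, g z ∂μ := by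
  rw [← integral_tsum_of_summable_integral_norm
    (fun k => (hg.comp_sub_right (y k)).const_mul (a k)) (summable_integral_norm_mul_comp_sub ha y)]
  simp_rw [integral_const_mul, integral_sub_right_eq_self g]
  exact tsum_mul_right

end TranslateMixture

theorem integrable_and_integral_eq_one_of_withDensity {α : Type*} [MeasurableSpace α]
    {ν : Measure α} {p : α → ℝ} (hp : AEStronglyMeasurable p ν) (hp_nonneg : 0 ≤ᵐ[ν] p)
    [IsProbabilityMeasure (ν.withDensity fun x => ENNReal.ofReal (p x))] :
    Integrable p ν ∧ ∫ x, p x ∂ν = 1 := by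
  have hlint : ∫⁻ x, ENNReal.ofReal (p x) ∂ν = 1 := by
    have := measure_univ (μ := ν.withDensity fun x => ENNReal.ofReal (p x))
    rwa [withDensity_apply _ MeasurableSet.univ, Measure.restrict_univ] at this
  refine ⟨(lintegral_ofReal_ne_top_iff_integrable hp hp_nonneg).1 (hlint ▸ ENNReal.one_ne_top), ?_⟩
  rw [integral_eq_lintegral_of_nonneg_ae hp_nonneg hp, hlint, ENNReal.toReal_one]

section MixtureEntropy

variable {G ι : Type*} [MeasurableSpace G] [AddGroup G] [MeasurableAdd G] {μ : Measure G}
  [μ.IsAddRightInvariant] [Countable ι] {p : G → ℝ} {w : ι → ℝ}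

theorem ae_tsum_mul_negMulLog_comp_sub_le (hp_nonneg : ∀ x, 0 ≤ p x) (hp : Integrable p μ)
    (hφp : Integrable (fun x => negMulLog (p x)) μ) (hw_nonneg : ∀ k, 0 ≤ w k)
    (hw_sum : ∑' k, w k = 1) (y : ι → G) :
    ∀ᵐ z ∂μ, ∑' k, w k * negMulLog (p (z - y k)) ≤ negMulLog (∑' k, w k * p (z - y k)) := by
  have hw : Summable w := summable_of_tsum_ne_zero (hw_sum ▸ one_ne_zero)
  filter_upwards [ae_summable_mul_comp_sub hp hw y, ae_summable_mul_comp_sub hφp hw y]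
    with z hwp hwφp
  exact tsum_mul_negMulLog_le_negMulLog_tsum hw_nonneg hw_sum (fun _ => hp_nonneg _) hwp hwφp

theorem ae_negMulLog_tsum_mul_comp_sub_le (hp_nonneg : ∀ x, 0 ≤ p x) (hp : Integrable p μ)
    (hφp : Integrable (fun x => negMulLog (p x)) μ) (hw_nonneg : ∀ k, 0 ≤ w k) (hw : Summable w)
    (hφw : Summable fun k => negMulLog (w k)) (y : ι → G) :
    ∀ᵐ z ∂μ, negMulLog (∑' k, w k * p (z - y k))
      ≤ ∑' k, negMulLog (w k) * p (z - y k) + ∑' k, w k * negMulLog (p (z - y k)) := by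
  filter_upwards [ae_summable_mul_comp_sub hp hw y, ae_summable_mul_comp_sub hp hφw y,
    ae_summable_mul_comp_sub hφp hw y] with z hwp hφwp hwφp
  exact negMulLog_tsum_mul_le hw_nonneg (fun _ => hp_nonneg _) hwp hφwp hwφp

theorem integrable_negMulLog_tsum_mul_comp_sub (hp_nonneg : ∀ x, 0 ≤ p x) (hp : Integrable p μ)
    (hφp : Integrable (fun x => negMulLog (p x)) μ) (hw_nonneg : ∀ k, 0 ≤ w k)
    (hw_sum : ∑' k, w k = 1) (hφw : Summable fun k => negMulLog (w k)) (y : ι → G) :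
    Integrable (fun z => negMulLog (∑' k, w k * p (z - y k))) μ := by
  have hw : Summable w := summable_of_tsum_ne_zero (hw_sum ▸ one_ne_zero)
  exact integrable_of_le_of_le
    (continuous_negMulLog.comp_aestronglyMeasurable (integrable_tsum_mul_comp_sub hp hw y).1)
    (ae_tsum_mul_negMulLog_comp_sub_le hp_nonneg hp hφp hw_nonneg hw_sum y)
    (ae_negMulLog_tsum_mul_comp_sub_le hp_nonneg hp hφp hw_nonneg hw hφw y)
    (integrable_tsum_mul_comp_sub hφp hw y)
    ((integrable_tsum_mul_comp_sub hp hφw y).add (integrable_tsum_mul_comp_sub hφp hw y))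

theorem integral_negMulLog_tsum_mul_comp_sub_le (hp_nonneg : ∀ x, 0 ≤ p x) (hp : Integrable p μ)
    (hp_one : ∫ x, p x ∂μ = 1) (hφp : Integrable (fun x => negMulLog (p x)) μ)
    (hw_nonneg : ∀ k, 0 ≤ w k) (hw_sum : ∑' k, w k = 1) (hφw : Summable fun k => negMulLog (w k))
    (y : ι → G) :
    ∫ z, negMulLog (∑' k, w k * p (z - y k)) ∂μ
      ≤ ∑' k, negMulLog (w k) + ∫ x, negMulLog (p x) ∂μ := by
  have hw : Summable w := summable_of_tsum_ne_zero (hw_sum ▸ one_ne_zero)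
  have hφw_int := integrable_tsum_mul_comp_sub hp hφw y
  have hφp_int := integrable_tsum_mul_comp_sub hφp hw y
  calc ∫ z, negMulLog (∑' k, w k * p (z - y k)) ∂μ
      ≤ ∫ z, (∑' k, negMulLog (w k) * p (z - y k) + ∑' k, w k * negMulLog (p (z - y k))) ∂μ :=
        integral_mono_ae
          (integrable_negMulLog_tsum_mul_comp_sub hp_nonneg hp hφp hw_nonneg hw_sum hφw y)
          (hφw_int.add hφp_int)
          (ae_negMulLog_tsum_mul_comp_sub_le hp_nonneg hp hφp hw_nonneg hw hφw y)
    _ = ∑' k, negMulLog (w k) + ∫ x, negMulLog (p x) ∂μ := by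
        rw [integral_add hφw_int hφp_int, integral_tsum_mul_comp_sub hp hφw y,
          integral_tsum_mul_comp_sub hφp hw y, hp_one, hw_sum, mul_one, one_mul]

end MixtureEntropy

theorem entropy_of_sum_with_discrete_general (d : ℕ)
    (Ω : Type*) [MeasurableSpace Ω] (μ : Measure Ω) [IsProbabilityMeasure μ]
    (X Y : Ω → EuclideanSpace ℝ (Fin d))
    (hX_meas : Measurable X) (hY_meas : Measurable Y)
    (hindep : IndepFun X Y μ)
    (p : EuclideanSpace ℝ (Fin d) → ℝ)
    (hp_meas : Measurable p) (hp_nonneg : ∀ x, 0 ≤ p x)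
    (hX_density : Measure.map X μ = volume.withDensity (fun x => ENNReal.ofReal (p x)))
    (y : ℕ → EuclideanSpace ℝ (Fin d)) (w : ℕ → ℝ)
    (hw_nonneg : ∀ k, 0 ≤ w k) (hw_sum : ∑' k, w k = 1)
    (hY_law : Measure.map Y μ
      = Measure.sum (fun k => ENNReal.ofReal (w k) • Measure.dirac (y k)))
    (q : EuclideanSpace ℝ (Fin d) → ℝ)
    (hq : q = fun z => ∑' k, w k * p (z - y k))
    (hhX : Integrable (fun x => p x * Real.log (p x)))
    (hHY : Summable (fun k => w k * Real.log (w k))) :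
    Measure.map (fun ω => X ω + Y ω) μ
        = volume.withDensity (fun z => ENNReal.ofReal (q z)) ∧
    -∫ z, q z * Real.log (q z)
        ≤ (-∫ x, p x * Real.log (p x)) + (-∑' k, w k * Real.log (w k)) := by
  have : IsProbabilityMeasure (volume.withDensity fun x => ENNReal.ofReal (p x)) :=
    hX_density ▸ Measure.isProbabilityMeasure_map hX_meas.aemeasurable
  obtain ⟨hp_int, hp_one⟩ := integrable_and_integral_eq_one_of_withDensity (ν := volume)
    hp_meas.aestronglyMeasurable (ae_of_all _ hp_nonneg)
  have hw : Summable w := summable_of_tsum_ne_zero (hw_sum ▸ one_ne_zero)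
  subst hq
  constructor
  · rw [show (fun ω => X ω + Y ω) = X + Y from rfl, hindep.map_add_eq_map_conv_map hX_meas hY_meas,
      hX_density, hY_law, withDensity_conv_sum_smul_dirac hp_meas.ennreal_ofReal]
    refine withDensity_congr_ae ?_
    filter_upwards [ae_summable_mul_comp_sub hp_int hw y] with z hz
    rw [ENNReal.ofReal_tsum_of_nonneg (fun k => mul_nonneg (hw_nonneg k) (hp_nonneg _)) hz]
    simp_rw [ENNReal.ofReal_mul (hw_nonneg _)]
  · have hφp : Integrable fun x => negMulLog (p x) := by simpa [negMulLog_eq_neg] using hhX.neg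
    have hφw : Summable fun k => negMulLog (w k) := by simpa [negMulLog_eq_neg] using hHY.neg
    have := integral_negMulLog_tsum_mul_comp_sub_le hp_nonneg hp_int hp_one hφp hw_nonneg hw_sum
      hφw y
    simp only [negMulLog_eq_neg, integral_neg, tsum_neg] at this ⊢
    linarith

theorem entropy_of_sum_with_discrete (d : ℕ) (hd : 1 ≤ d)
    (Ω : Type*) [MeasurableSpace Ω] (μ : Measure Ω) [IsProbabilityMeasure μ]
    (X Y : Ω → EuclideanSpace ℝ (Fin d))
    (hX_meas : Measurable X) (hY_meas : Measurable Y)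
    (hindep : IndepFun X Y μ)
    (p : EuclideanSpace ℝ (Fin d) → ℝ)
    (hp_meas : Measurable p) (hp_nonneg : ∀ x, 0 ≤ p x)
    (hX_density : Measure.map X μ = volume.withDensity (fun x => ENNReal.ofReal (p x)))
    (y : ℕ → EuclideanSpace ℝ (Fin d)) (w : ℕ → ℝ)
    (hw_nonneg : ∀ k, 0 ≤ w k) (hw_sum : ∑' k, w k = 1)
    (hY_law : Measure.map Y μ
      = Measure.sum (fun k => ENNReal.ofReal (w k) • Measure.dirac (y k)))
    (q : EuclideanSpace ℝ (Fin d) → ℝ)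
    (hq : q = fun z => ∑' k, w k * p (z - y k))
    (hhX : Integrable (fun x => p x * Real.log (p x)))
    (hHY : Summable (fun k => w k * Real.log (w k))) :
    Measure.map (fun ω => X ω + Y ω) μ
        = volume.withDensity (fun z => ENNReal.ofReal (q z)) ∧
    -∫ z, q z * Real.log (q z)
        ≤ (-∫ x, p x * Real.log (p x)) + (-∑' k, w k * Real.log (w k)) :=
  entropy_of_sum_with_discrete_general d Ω μ X Y hX_meas hY_meas hindep p hp_meas hp_nonneg
    hX_density y w hw_nonneg hw_sum hY_law q hq hhX hHY
end

section
/- For any integer-valued random variable Y with finite second moment, the Shannon entropy satisfies H(Y) ≤ (1/2) log(2πe (Var(Y) + 1/12)). -/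
/-!
Let `q k` be the mass that the Gaussian with mean `m = 𝔼 Y` and variance `s = Var Y + 1 / 12`
gives to the unit interval `(k - 1/2, k + 1/2]`. Jensen's inequality for the logarithm of the
density on that interval gives `-log (q k) ≤ ½ log (2πs) + ((k - m)² + 1/12) / (2s)`,
and Gibbs' inequality `H(Y) ≤ -∑ P(Y = k) log (q k)` then bounds `H(Y)` by
`½ log (2πs) + (Var Y + 1/12) / (2s) = ½ log (2πes)`.
-/

open Real MeasureTheory ProbabilityTheory

open scoped NNReal

theorem hasSum_measure_preimage_singleton_mul {Ω α : Type*} [MeasurableSpace Ω]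
    [MeasurableSpace α] [Countable α] [MeasurableSingletonClass α] {μ : Measure Ω}
    {Y : Ω → α} (hY : Measurable Y) {f : α → ℝ} (hf : Integrable (fun ω => f (Y ω)) μ) :
    HasSum (fun k => (μ {ω | Y ω = k}).toReal * f k) (∫ ω, f (Y ω) ∂μ) := by
  have hfm := (measurable_of_countable f).aestronglyMeasurable (μ := μ.map Y)
  rw [← integral_map hY.aemeasurable hfm]
  change Integrable (f ∘ Y) μ at hf
  rw [← integrable_map_measure hfm hY.aemeasurable, ← (μ.map Y).sum_smul_dirac] at hf
  have h := hasSum_integral_measure hf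
  rw [Measure.sum_smul_dirac] at h
  refine h.congr_fun fun k => ?_
  rw [integral_smul_measure, integral_dirac, smul_eq_mul,
    Measure.map_apply hY (measurableSet_singleton k)]
  rfl

theorem Real.negMulLog_le_neg_mul_log_add_sub {p q : ℝ} (hp : 0 ≤ p) (hq : 0 < q) :
    negMulLog p ≤ -(p * log q) + (q - p) := by
  rcases hp.eq_or_lt with rfl | hp
  · simpa using hq.le
  have h := mul_le_mul_of_nonneg_left (log_le_sub_one_of_pos (div_pos hq hp)) hp.le
  rw [log_div hq.ne' hp.ne', mul_sub, mul_sub, mul_div_cancel₀ q hp.ne'] at h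
  rw [negMulLog]
  linarith

/-- Gibbs' inequality. -/
theorem neg_tsum_mul_log_le {ι : Type*} {p q L : ι → ℝ} {t c : ℝ} (hp0 : ∀ i, 0 ≤ p i)
    (hp : HasSum p 1) (hq : HasSum q t) (ht : t ≤ 1) (hqL : ∀ i, exp (-L i) ≤ q i)
    (hpL : HasSum (fun i => p i * L i) c) :
    -∑' i, p i * log (p i) ≤ c := by
  have hterm : ∀ i, negMulLog (p i) ≤ p i * L i + (q i - p i) := fun i => by
    have h := negMulLog_le_neg_mul_log_add_sub (hp0 i) (exp_pos (-L i))
    rw [log_exp] at h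
    linarith [hqL i]
  have hbound := hpL.add (hq.sub hp)
  have hent : Summable fun i => negMulLog (p i) :=
    hbound.summable.of_nonneg_of_le
      (fun i => negMulLog_nonneg (hp0 i) (le_hasSum hp i fun j _ => hp0 j)) hterm
  calc -∑' i, p i * log (p i) = ∑' i, negMulLog (p i) := by
        rw [← tsum_neg]; simp only [negMulLog, neg_mul]
    _ ≤ c + (t - 1) := hbound.tsum_eq ▸ hent.tsum_le_tsum hterm hbound.summable
    _ ≤ c := by linarith

theorem exp_setIntegral_le_setIntegral_exp {α : Type*} [MeasurableSpace α] {μ : Measure α}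
    {s : Set α} (hs : μ s = 1) {f : α → ℝ} (hf : IntegrableOn f s μ)
    (hef : IntegrableOn (fun x => exp (f x)) s μ) :
    exp (∫ x in s, f x ∂μ) ≤ ∫ x in s, exp (f x) ∂μ :=
  haveI : IsProbabilityMeasure (μ.restrict s) := ⟨by rw [Measure.restrict_apply_univ, hs]⟩
  convexOn_exp.map_integral_le continuous_exp.continuousOn isClosed_univ
    (ae_of_all _ fun _ => Set.mem_univ _) hf hef

theorem integral_sq_sub_centered_unit_interval (c m : ℝ) :
    ∫ x in c - 1 / 2..c + 1 / 2, (x - m) ^ 2 = (c - m) ^ 2 + 1 / 12 := by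
  rw [intervalIntegral.integral_comp_sub_right (fun x => x ^ 2), integral_pow]
  ring

theorem Real.half_log_two_pi_mul_add_half {s : ℝ} (hs : 0 < s) :
    1 / 2 * log (2 * π * s) + 1 / 2 = 1 / 2 * log (2 * π * exp 1 * s) := by
  rw [show 2 * π * exp 1 * s = exp 1 * (2 * π * s) by ring,
    log_mul (exp_pos 1).ne' (by positivity), log_exp]
  ring

namespace ProbabilityTheory

theorem log_gaussianPDFReal (m : ℝ) {v : ℝ≥0} (hv : v ≠ 0) (x : ℝ) :
    log (gaussianPDFReal m v x) = -(1 / 2) * log (2 * π * v) - (x - m) ^ 2 / (2 * v) := by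
  have h2πv : 0 < 2 * π * v := by positivity
  rw [gaussianPDFReal, log_mul (inv_pos.2 (sqrt_pos.2 h2πv)).ne' (exp_pos _).ne', log_inv,
    log_sqrt h2πv.le, log_exp]
  ring

theorem hasSum_integral_Ioc_gaussianPDFReal (m : ℝ) {v : ℝ≥0} (hv : v ≠ 0) :
    HasSum (fun k : ℤ => ∫ x in Set.Ioc ((k : ℝ) - 1 / 2) (k + 1 / 2), gaussianPDFReal m v x)
      1 := by
  have h := (integrable_gaussianPDFReal m v).hasSum_intervalIntegral (-(1 / 2))
  rw [integral_gaussianPDFReal_eq_one m hv] at h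
  refine h.congr_fun fun k => ?_
  rw [intervalIntegral.integral_of_le (by linarith)]
  ring_nf

/-- Jensen's inequality for the log-density on the interval; the `1 / 12` is the variance of the
uniform law on a unit interval. -/
theorem exp_neg_le_integral_Ioc_gaussianPDFReal (m : ℝ) {v : ℝ≥0} (hv : v ≠ 0) (c : ℝ) :
    exp (-((1 / 2) * log (2 * π * v) + ((c - m) ^ 2 + 1 / 12) / (2 * v))) ≤
      ∫ x in Set.Ioc (c - 1 / 2) (c + 1 / 2), gaussianPDFReal m v x := by
  have hc : c - 1 / 2 ≤ c + 1 / 2 := by linarith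
  have hquad : Continuous fun x : ℝ => (x - m) ^ 2 / (2 * v) := by fun_prop
  have hlog : ∫ x in Set.Ioc (c - 1 / 2) (c + 1 / 2), log (gaussianPDFReal m v x) =
      -((1 / 2) * log (2 * π * v) + ((c - m) ^ 2 + 1 / 12) / (2 * v)) := by
    simp_rw [log_gaussianPDFReal m hv, ← intervalIntegral.integral_of_le hc]
    rw [intervalIntegral.integral_sub intervalIntegrable_const (hquad.intervalIntegrable _ _),
      intervalIntegral.integral_div, integral_sq_sub_centered_unit_interval,
      intervalIntegral.integral_const, smul_eq_mul]
    ring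
  have hlogi : IntegrableOn (fun x => log (gaussianPDFReal m v x))
      (Set.Ioc (c - 1 / 2) (c + 1 / 2)) := by
    simp_rw [log_gaussianPDFReal m hv]
    exact (continuous_const.sub hquad).integrableOn_Icc.mono_set Set.Ioc_subset_Icc_self
  have hexp : ∀ x, exp (log (gaussianPDFReal m v x)) = gaussianPDFReal m v x := fun x =>
    exp_log (gaussianPDFReal_pos m v x hv)
  have h := exp_setIntegral_le_setIntegral_exp (by rw [volume_Ioc]; norm_num) hlogi
    ((integrable_gaussianPDFReal m v).integrableOn.congr_fun (fun x _ => (hexp x).symm)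
      measurableSet_Ioc)
  simpa only [hlog, hexp] using h

end ProbabilityTheory

theorem discrete_entropy_bound (Ω : Type*) [MeasurableSpace Ω]
    (μ : Measure Ω) [IsProbabilityMeasure μ]
    (Y : Ω → ℤ) (hY_meas : Measurable Y)
    (hY2 : Integrable (fun ω => ((Y ω : ℝ)) ^ 2) μ) :
    -∑' k : ℤ, (μ {ω | Y ω = k}).toReal * Real.log (μ {ω | Y ω = k}).toReal
      ≤ (1 / 2) * Real.log (2 * π * Real.exp 1
          * (variance (fun ω => (Y ω : ℝ)) μ + 1 / 12)) := by
  set X : Ω → ℝ := fun ω => (Y ω : ℝ)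
  set m := ∫ ω, X ω ∂μ
  have hs : 0 < variance X μ + 1 / 12 := by linarith [variance_nonneg X μ]
  set v : ℝ≥0 := ⟨variance X μ + 1 / 12, hs.le⟩
  have hv : v ≠ 0 := NNReal.coe_ne_zero.1 hs.ne'
  have hX : MemLp X 2 μ := (memLp_two_iff_integrable_sq (by fun_prop)).2 hY2
  have hp := hasSum_measure_preimage_singleton_mul hY_meas (f := fun _ => 1)
    (integrable_const (μ := μ) (1 : ℝ))
  simp only [mul_one, integral_const, probReal_univ, smul_eq_mul] at hp
  have hvar := hasSum_measure_preimage_singleton_mul hY_meas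
    (f := fun k : ℤ => ((k : ℝ) - m) ^ 2) (hX.sub (memLp_const m)).integrable_sq
  rw [← variance_eq_integral hX.aemeasurable] at hvar
  have hpL : HasSum (fun k : ℤ => (μ {ω | Y ω = k}).toReal *
      ((1 / 2) * log (2 * π * v) + (((k : ℝ) - m) ^ 2 + 1 / 12) / (2 * v)))
      ((1 / 2) * log (2 * π * v) + 1 / 2) := by
    have h := (hp.mul_left ((1 / 2) * log (2 * π * v) + 1 / 12 / (2 * v))).add
      (hvar.div_const (2 * v))
    have hV : variance X μ = v - 1 / 12 := by
      rw [show (v : ℝ) = variance X μ + 1 / 12 from rfl]; ring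
    rw [hV, show ((1 / 2) * log (2 * π * v) + 1 / 12 / (2 * v)) * 1 + (v - 1 / 12) / (2 * v)
      = (1 / 2) * log (2 * π * v) + 1 / 2 by field_simp; ring] at h
    exact h.congr_fun fun k => by ring
  calc _ ≤ (1 / 2) * log (2 * π * v) + 1 / 2 :=
        neg_tsum_mul_log_le (fun k => ENNReal.toReal_nonneg) hp
          (hasSum_integral_Ioc_gaussianPDFReal m hv) le_rfl
          (fun k => exp_neg_le_integral_Ioc_gaussianPDFReal m hv k) hpL
    _ = _ := half_log_two_pi_mul_add_half hs
end
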